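/- (Lemma 1, arctan telescoping.) Let n ≥ 1 and let f : ℕ → ℝ be such that 1 + f(k+1)·f(k) ≠ 0 for all 1 ≤ k ≤ n. Define h(k) = (f(k+1) − f(k)) / (1 + f(k+1)·f(k)). Then ∑_{k=1}^{n} arctan(h(k)) = arctan(f(n+1)) − arctan(f(1)) + π · ∑_{k} sgn(f(k)), where the last sum is over all 1 ≤ k ≤ n with f(k+1)·f(k) < −1, and sgn(x) equals 1 for x > 0, 0 for x = 0, and −1 for x < 0. -/

import Mathlib

open Real Finset

namespace Real

variable {x y : ℝ}

theorem arctan_sub (h : -1 < x * y) :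
    arctan x - arctan y = arctan ((x - y) / (1 + x * y)) := by
  rw [sub_eq_add_neg, ← arctan_neg, arctan_add (by linarith)]
  ring_nf

theorem arctan_sub_eq_add_pi (h : x * y < -1) (hy : y < 0) :
    arctan x - arctan y = arctan ((x - y) / (1 + x * y)) + π := by
  have hx : 0 < x := by nlinarith
  rw [sub_eq_add_neg, ← arctan_neg, arctan_add_eq_add_pi (by linarith) hx]
  ring_nf

theorem arctan_sub_eq_sub_pi (h : x * y < -1) (hy : 0 < y) :
    arctan x - arctan y = arctan ((x - y) / (1 + x * y)) - π := by
  have hx : x < 0 := by nlinarith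
  rw [sub_eq_add_neg, ← arctan_neg, arctan_add_eq_sub_pi (by linarith) hx]
  ring_nf

/-- `π * sign y` is the multiple of `π` by which `arctan x - arctan y` leaves `(-π/2, π/2)`. -/
theorem arctan_sub_div_one_add_mul (hxy : 1 + x * y ≠ 0) :
    arctan ((x - y) / (1 + x * y)) =
      arctan x - arctan y + if x * y < -1 then π * sign y else 0 := by
  rcases lt_trichotomy (x * y) (-1) with hlt | heq | hgt
  · rw [if_pos hlt]
    rcases lt_or_gt_of_ne (show y ≠ 0 by rintro rfl; linarith) with hy | hy
    · rw [arctan_sub_eq_add_pi hlt hy, sign_of_neg hy]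
      ring
    · rw [arctan_sub_eq_sub_pi hlt hy, sign_of_pos hy]
      ring
  · exact absurd (by linarith) hxy
  · rw [if_neg hgt.not_gt, arctan_sub hgt]
    ring

end Real

theorem arctan_telescoping_general (n : ℕ) (f : ℕ → ℝ)
    (hf : ∀ k, 1 ≤ k → k ≤ n → 1 + f (k + 1) * f k ≠ 0)
    (h : ℕ → ℝ) (hh : ∀ k, h k = (f (k + 1) - f k) / (1 + f (k + 1) * f k)) :
    ∑ k ∈ Finset.Icc 1 n, Real.arctan (h k) =
      Real.arctan (f (n + 1)) - Real.arctan (f 1) +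
        π * ∑ k ∈ (Finset.Icc 1 n).filter (fun k => f (k + 1) * f k < -1), Real.sign (f k) := by
  have hterm : ∀ k ∈ Icc 1 n, arctan (h k) = (arctan (f (k + 1)) - arctan (f k)) +
      if f (k + 1) * f k < -1 then π * sign (f k) else 0 := by
    intro k hk
    rw [mem_Icc] at hk
    rw [hh k, arctan_sub_div_one_add_mul (hf k hk.1 hk.2)]
  have htelescope : ∑ k ∈ Icc 1 n, (arctan (f (k + 1)) - arctan (f k)) =
      arctan (f (n + 1)) - arctan (f 1) := by
    rw [← Ico_add_one_right_eq_Icc]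
    exact sum_Ico_sub (arctan ∘ f) (by omega)
  rw [sum_congr rfl hterm, sum_add_distrib, htelescope, mul_sum, sum_filter]

/-- **Lemma 1 (arctan telescoping).** If `1 + f(k+1) f(k) ≠ 0` for `1 ≤ k ≤ n` and
`h(k) = (f(k+1) - f(k)) / (1 + f(k+1) f(k))`, then
`∑_{k=1}^n arctan (h k) = arctan (f (n+1)) - arctan (f 1) + π ∑ sgn (f k)`,
the last sum being over those `1 ≤ k ≤ n` with `f(k+1) f(k) < -1`. -/
theorem arctan_telescoping (n : ℕ) (hn : 1 ≤ n) (f : ℕ → ℝ)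
    (hf : ∀ k, 1 ≤ k → k ≤ n → 1 + f (k + 1) * f k ≠ 0)
    (h : ℕ → ℝ) (hh : ∀ k, h k = (f (k + 1) - f k) / (1 + f (k + 1) * f k)) :
    ∑ k ∈ Finset.Icc 1 n, Real.arctan (h k) =
      Real.arctan (f (n + 1)) - Real.arctan (f 1) +
        π * ∑ k ∈ (Finset.Icc 1 n).filter (fun k => f (k + 1) * f k < -1), Real.sign (f k) :=
  arctan_telescoping_general n f hf h hh
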